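/- arXiv:1709.00080 — 4 statements merged into one kernel-verified Lean document; each statement's English description precedes it below -/
import Mathlib

section
/- Let φ₁, φ₂ : ZMod p → ZMod p and define the bilinear average A(f₁,f₂)(x) = p⁻¹ ∑_y f₁(x+φ₁(y)) f₂(x+φ₂(y)). Then for characteristic functions f of a set A ⊆ ZMod p with |A| = δp, if ‖A(f,f) − E[f]²‖₂ ≤ C p^{−γ} ‖f‖₂² with δ³ ≥ 2C p^{−γ} δ, then the number of pairs (x,y) ∈ (ZMod p)² with x, x+φ₁(y), x+φ₂(y) all in A is at least (δ³/2) p². -/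
open Finset
open scoped BigOperators

/-! Write the count as `∑ₓ f x ∑_y f (x + φ₁ y) f (x + φ₂ y) = p ∑ₓ f x · A(f,f)(x)` and split
`A(f,f) = E[f]² + (A(f,f) − E[f]²)`. The main term is `p² E[f]³`, and Cauchy–Schwarz bounds the
error term by `p² ‖f‖₂ ‖A(f,f) − E[f]²‖₂`. For `f = 1_A` we have `E[f] = δ` and `‖f‖₂ ≤ 1`, so the
decay hypothesis makes the error at most half of the main term. -/

lemma neg_card_mul_sqrt_mul_sqrt_le_sum_mul {G : Type*} [Fintype G] (f g : G → ℝ) :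
    -(Fintype.card G * (√(𝔼 x, f x ^ 2) * √(𝔼 x, g x ^ 2))) ≤ ∑ x, f x * g x := by
  have hcs := Real.sum_mul_le_sqrt_mul_sqrt univ f (-g)
  have hsqrt (h : G → ℝ) : √(∑ x, h x ^ 2) = √(Fintype.card G) * √(𝔼 x, h x ^ 2) := by
    rw [← Real.sqrt_mul (Nat.cast_nonneg _), Fintype.card_mul_expect]
  simp only [Pi.neg_apply, mul_neg, sum_neg_distrib, neg_sq, hsqrt] at hcs
  have hn : √(Fintype.card G : ℝ) * √(Fintype.card G) = Fintype.card G :=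
    Real.mul_self_sqrt (Nat.cast_nonneg _)
  linear_combination hcs + (√(𝔼 x, f x ^ 2) * √(𝔼 x, g x ^ 2)) * hn

section BilinearAverage

variable {G : Type*} [Fintype G] [Add G]

noncomputable def bilinearAverage (φ₁ φ₂ : G → G) (f₁ f₂ : G → ℝ) (x : G) : ℝ :=
  𝔼 y, f₁ (x + φ₁ y) * f₂ (x + φ₂ y)

theorem card_sq_mul_sub_le_sum_sum_mul_mul (φ₁ φ₂ : G → G) (f : G → ℝ) :
    (Fintype.card G : ℝ) ^ 2 * ((𝔼 x, f x) ^ 3 - √(𝔼 x, f x ^ 2) *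
        √(𝔼 x, (bilinearAverage φ₁ φ₂ f f x - (𝔼 x, f x) ^ 2) ^ 2))
      ≤ ∑ x, ∑ y, f x * f (x + φ₁ y) * f (x + φ₂ y) := by
  set n : ℝ := (Fintype.card G : ℝ)
  set E := 𝔼 x, f x
  set D := fun x => bilinearAverage φ₁ φ₂ f f x - E ^ 2
  have hsum : ∑ x, ∑ y, f x * f (x + φ₁ y) * f (x + φ₂ y)
      = n * ∑ x, f x * D x + n ^ 2 * E ^ 3 := by
    calc ∑ x, ∑ y, f x * f (x + φ₁ y) * f (x + φ₂ y)
        = ∑ x, (n * (f x * D x) + n * E ^ 2 * f x) := sum_congr rfl fun x _ => by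
          have hA : n * bilinearAverage φ₁ φ₂ f f x = ∑ y, f (x + φ₁ y) * f (x + φ₂ y) :=
            Fintype.card_mul_expect _
          simp only [D, mul_assoc, ← mul_sum, ← hA]
          ring
      _ = n * ∑ x, f x * D x + n ^ 2 * E ^ 3 := by
        rw [sum_add_distrib, ← mul_sum, ← mul_sum, ← Fintype.card_mul_expect f]; ring
  have hcs := neg_card_mul_sqrt_mul_sqrt_le_sum_mul f D
  rw [hsum]
  nlinarith [hcs, (by positivity : 0 ≤ n)]

end BilinearAverage

section Indicator

lemma sq_indicator_one {α R : Type*} [MonoidWithZero R] (s : Set α) (x : α) :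
    s.indicator (1 : α → R) x ^ 2 = s.indicator 1 x := by
  by_cases hx : x ∈ s <;> simp [hx]

variable {G : Type*} [Fintype G] [Add G] [DecidableEq G]

lemma card_filter_eq_sum_sum_indicator (A : Finset G) (φ₁ φ₂ : G → G) :
    (#{xy : G × G | xy.1 ∈ A ∧ xy.1 + φ₁ xy.2 ∈ A ∧ xy.1 + φ₂ xy.2 ∈ A} : ℝ)
      = ∑ x, ∑ y, (A : Set G).indicator 1 x * (A : Set G).indicator 1 (x + φ₁ y)
          * (A : Set G).indicator (1 : G → ℝ) (x + φ₂ y) := by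
  rw [card_filter, Nat.cast_sum, Fintype.sum_prod_type]
  refine sum_congr rfl fun x _ => sum_congr rfl fun y _ => ?_
  by_cases h₀ : x ∈ A <;> by_cases h₁ : x + φ₁ y ∈ A <;> by_cases h₂ : x + φ₂ y ∈ A <;>
    simp [h₀, h₁, h₂]

theorem dens_pow_three_div_two_mul_card_sq_le (A : Finset G) (φ₁ φ₂ : G → G)
    (hdecay : √(𝔼 x, (bilinearAverage φ₁ φ₂ ((A : Set G).indicator 1) ((A : Set G).indicator 1) x
      - (A.dens : ℝ) ^ 2) ^ 2) ≤ (A.dens : ℝ) ^ 3 / 2) :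
    (A.dens : ℝ) ^ 3 / 2 * Fintype.card G ^ 2
      ≤ #{xy : G × G | xy.1 ∈ A ∧ xy.1 + φ₁ xy.2 ∈ A ∧ xy.1 + φ₂ xy.2 ∈ A} := by
  have hlower := card_sq_mul_sub_le_sum_sum_mul_mul φ₁ φ₂ ((A : Set G).indicator (1 : G → ℝ))
  simp only [sq_indicator_one, expect_indicator_one] at hlower
  rw [card_filter_eq_sum_sum_indicator]
  have hd1 : (A.dens : ℝ) ≤ 1 := by exact_mod_cast A.dens_le_one
  have hsqrt : √(A.dens : ℝ) ≤ 1 := Real.sqrt_le_one.mpr hd1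
  set D := √(𝔼 x, (bilinearAverage φ₁ φ₂ ((A : Set G).indicator 1) ((A : Set G).indicator 1) x
      - (A.dens : ℝ) ^ 2) ^ 2)
  have hD : √(A.dens : ℝ) * D ≤ A.dens ^ 3 / 2 :=
    (mul_le_of_le_one_left (Real.sqrt_nonneg _) hsqrt).trans hdecay
  nlinarith [hD, (by positivity : (0 : ℝ) ≤ Fintype.card G ^ 2)]

end Indicator

lemma ZMod.expect_eq_inv_mul_sum {p : ℕ} [NeZero p] (g : ZMod p → ℝ) :
    𝔼 x, g x = (p : ℝ)⁻¹ * ∑ x, g x := by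
  rw [Fintype.expect_eq_sum_div_card, ZMod.card, div_eq_inv_mul]

lemma ZMod.norm_inv_mul_sum_sub_sq_ofReal {p : ℕ} [NeZero p] (φ₁ φ₂ : ZMod p → ZMod p)
    (g : ZMod p → ℝ) (x : ZMod p) :
    ‖(p : ℂ)⁻¹ * (∑ y, (g (x + φ₁ y) : ℂ) * g (x + φ₂ y)) - ((p : ℂ)⁻¹ * ∑ x', (g x' : ℂ)) ^ 2‖
      = |bilinearAverage φ₁ φ₂ g g x - (𝔼 x, g x) ^ 2| := by
  rw [bilinearAverage, ZMod.expect_eq_inv_mul_sum, ZMod.expect_eq_inv_mul_sum, ← Real.norm_eq_abs,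
    ← Complex.norm_real]
  push_cast
  rfl

/-- Roth-type counting from the `L²` decay estimate: if `f = 1_A`, `|A| = δp`,
`‖A_Γ(f,f) − E[f]²‖₂ ≤ C p^{−γ} ‖f‖₂²` and `δ³ ≥ 2 C p^{−γ} δ`, then there are at least
`(δ³/2) p²` pairs `(x,y)` with `x, x+φ₁(y), x+φ₂(y) ∈ A`. -/
theorem roth_from_decay (p : ℕ) [Fact p.Prime] (φ₁ φ₂ : ZMod p → ZMod p)
    (A : Finset (ZMod p)) (δ C γ : ℝ)
    (hA : (A.card : ℝ) = δ * p)
    (f : ZMod p → ℂ) (hf : f = fun x => if x ∈ A then (1 : ℂ) else 0)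
    (hbound :
      ((p : ℝ)⁻¹ * ∑ x : ZMod p,
          ‖(p : ℂ)⁻¹ * (∑ y : ZMod p, f (x + φ₁ y) * f (x + φ₂ y))
            - ((p : ℂ)⁻¹ * ∑ x' : ZMod p, f x') ^ 2‖ ^ 2) ^ ((1 : ℝ)/2)
        ≤ C * (p : ℝ) ^ (-γ) *
          (((p : ℝ)⁻¹ * ∑ x : ZMod p, ‖f x‖ ^ 2) ^ ((1 : ℝ)/2)) ^ 2)
    (hδ : δ ^ 3 ≥ 2 * C * (p : ℝ) ^ (-γ) * δ) :
    ((Finset.univ.filter fun xy : ZMod p × ZMod p =>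
        xy.1 ∈ A ∧ xy.1 + φ₁ xy.2 ∈ A ∧ xy.1 + φ₂ xy.2 ∈ A).card : ℝ)
      ≥ δ ^ 3 / 2 * (p : ℝ) ^ 2 := by
  set a := (A : Set (ZMod p)).indicator (1 : ZMod p → ℝ)
  obtain rfl : f = fun x => (a x : ℂ) := hf.trans <| funext fun x => by
    by_cases hx : x ∈ A <;> simp [a, hx]
  have hdens : (A.dens : ℝ) = δ := by
    rw [dens_eq_card_div_card, NNRat.cast_div, NNRat.cast_natCast, NNRat.cast_natCast, ZMod.card,
      hA, mul_div_cancel_right₀ _ (NeZero.ne (p : ℝ))]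
  have hδ0 : 0 ≤ δ := hdens ▸ NNRat.cast_nonneg _
  have hnorm : 𝔼 x, a x ^ 2 = δ := by simp only [a, sq_indicator_one, expect_indicator_one, hdens]
  simp only [ZMod.norm_inv_mul_sum_sub_sq_ofReal, sq_abs, Complex.norm_real, Real.norm_eq_abs,
    ← ZMod.expect_eq_inv_mul_sum, ← Real.sqrt_eq_rpow, hnorm, Real.sq_sqrt hδ0, a,
    expect_indicator_one, hdens] at hbound
  have hcount := dens_pow_three_div_two_mul_card_sq_le A φ₁ φ₂ <| by
    rw [hdens]; linarith
  rwa [ZMod.card, hdens] at hcount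
end

section
/- Let T be the operator T(g)(x) = ∑_y g(y) K(x,y) · conj(K(x−h, y+h)) for a fixed h ∈ ZMod p and kernel K : ZMod p × ZMod p → ℂ. Suppose (i) |K(x,y)| ≤ C₁ p^{−α} for all x,y, and (ii) there is a set D ⊆ (ZMod p)² such that each row and column of D has at most M elements and for (y,y') ∉ D, |∑_x K(x,y) conj(K(x−h,y+h)) conj(K(x,y')) K(x−h,y'+h)| ≤ C₂ p^{−β}. Then ∑_x |T(g)(x)|² ≤ C·max(p^{1−4α}, p^{1−β}) ∑_y |g(y)|² for a constant C depending on C₁, C₂, M. -/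
/-!
Expanding the square, `∑ₓ |Tg(x)|²` is the bilinear form `∑_{y,y'} g(y) conj(g(y')) I(y,y')`
with `I(y,y') = ∑ₓ A(x,y) conj(A(x,y'))`, `A(x,y) = K(x,y) conj(K(x−h,y+h))`. On the sparse set `D`
the trivial bound `|I| ≤ p (C₁p^{−α})⁴` is paid only `M` times per row and column (Schur's test),
while off `D` the bound `|I| ≤ C₂p^{−β}` is paid on all pairs, costing a factor `p` by
Cauchy–Schwarz.
-/

open Finset

section

variable {ι ξ : Type*}

theorem sum_comp_le_mul_sum_of_card_fiber_le [Fintype ι] [DecidableEq ι] {κ : Type*}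
    (D : Finset κ) (π : κ → ι) {M : ℕ} (hM : ∀ y, #{q ∈ D | π q = y} ≤ M) {u : ι → ℝ}
    (hu : 0 ≤ u) :
    ∑ q ∈ D, u (π q) ≤ M * ∑ y, u y := by
  rw [← sum_fiberwise D π, mul_sum]
  refine sum_le_sum fun y _ => ?_
  calc ∑ q ∈ D with π q = y, u (π q) = #{q ∈ D | π q = y} * u y := by
        rw [sum_congr rfl fun q hq => by rw [(mem_filter.mp hq).2], sum_const, nsmul_eq_mul]
    _ ≤ M * u y := by gcongr; exacts [hu y, hM y]

theorem sum_mul_le_of_card_fiber_le [Fintype ι] [DecidableEq ι] (D : Finset (ι × ι)) {M : ℕ}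
    (hrow : ∀ y, #{q ∈ D | q.1 = y} ≤ M) (hcol : ∀ y, #{q ∈ D | q.2 = y} ≤ M) (f : ι → ℝ) :
    ∑ q ∈ D, f q.1 * f q.2 ≤ M * ∑ y, f y ^ 2 := by
  have hsq : (0 : ι → ℝ) ≤ fun y => f y ^ 2 := fun y => sq_nonneg (f y)
  have h₁ := sum_comp_le_mul_sum_of_card_fiber_le D Prod.fst hrow hsq
  have h₂ := sum_comp_le_mul_sum_of_card_fiber_le D Prod.snd hcol hsq
  calc ∑ q ∈ D, f q.1 * f q.2 ≤ ∑ q ∈ D, (f q.1 ^ 2 + f q.2 ^ 2) / 2 :=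
        sum_le_sum fun q _ => by linarith [two_mul_le_add_sq (f q.1) (f q.2)]
    _ = ((∑ q ∈ D, f q.1 ^ 2) + ∑ q ∈ D, f q.2 ^ 2) / 2 := by
        rw [← sum_add_distrib, sum_div]
    _ ≤ M * ∑ y, f y ^ 2 := by linarith

theorem sum_sum_mul_mul_le_of_card_fiber_le [Fintype ι] [DecidableEq ι] (D : Finset (ι × ι))
    {M : ℕ} (hrow : ∀ y, #{q ∈ D | q.1 = y} ≤ M) (hcol : ∀ y, #{q ∈ D | q.2 = y} ≤ M)
    {f : ι → ℝ} (hf : 0 ≤ f) {J : ι → ι → ℝ} {a b : ℝ} (ha : 0 ≤ a) (hb : 0 ≤ b)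
    (hJ : ∀ y y', J y y' ≤ a) (hJD : ∀ y y', (y, y') ∉ D → J y y' ≤ b) :
    ∑ y, ∑ y', f y * f y' * J y y' ≤ (a * M + b * Fintype.card ι) * ∑ y, f y ^ 2 := by
  set F : ι × ι → ℝ := fun q => f q.1 * f q.2 * J q.1 q.2
  have hff : ∀ q : ι × ι, 0 ≤ f q.1 * f q.2 := fun q => mul_nonneg (hf q.1) (hf q.2)
  have hon : ∑ q ∈ univ with q ∈ D, F q ≤ a * M * ∑ y, f y ^ 2 := by
    calc ∑ q ∈ univ with q ∈ D, F q = ∑ q ∈ D, F q := by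
          congr 1; ext q; simp
      _ ≤ ∑ q ∈ D, a * (f q.1 * f q.2) := sum_le_sum fun q _ => by
          rw [mul_comm a]; exact mul_le_mul_of_nonneg_left (hJ _ _) (hff q)
      _ ≤ a * M * ∑ y, f y ^ 2 := by
          rw [← mul_sum, mul_assoc]
          exact mul_le_mul_of_nonneg_left (sum_mul_le_of_card_fiber_le D hrow hcol f) ha
  have hoff : ∑ q ∈ univ with q ∉ D, F q ≤ b * Fintype.card ι * ∑ y, f y ^ 2 := by
    calc ∑ q ∈ univ with q ∉ D, F q ≤ ∑ q ∈ univ with q ∉ D, b * (f q.1 * f q.2) :=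
          sum_le_sum fun q hq => by
            rw [mul_comm b]
            exact mul_le_mul_of_nonneg_left (hJD _ _ (mem_filter.mp hq).2) (hff q)
      _ ≤ ∑ q : ι × ι, b * (f q.1 * f q.2) :=
          sum_le_sum_of_subset_of_nonneg (filter_subset _ _) fun q _ _ => mul_nonneg hb (hff q)
      _ = b * (∑ y, f y) ^ 2 := by
          rw [← mul_sum, ← univ_product_univ, sum_product, sq, sum_mul_sum]
      _ ≤ b * Fintype.card ι * ∑ y, f y ^ 2 := by
          rw [mul_assoc]; exact mul_le_mul_of_nonneg_left sq_sum_le_card_mul_sum_sq hb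
  calc ∑ y, ∑ y', f y * f y' * J y y' = ∑ q, F q := by rw [← univ_product_univ, sum_product]
    _ = ∑ q ∈ univ with q ∈ D, F q + ∑ q ∈ univ with q ∉ D, F q :=
        (sum_filter_add_sum_filter_not _ _ _).symm
    _ ≤ _ := by linarith

theorem norm_mul_star_le_sq {R : Type*} [NonUnitalSeminormedRing R] [StarRing R]
    [NormedStarGroup R] {a b : R} {c : ℝ} (ha : ‖a‖ ≤ c) (hb : ‖b‖ ≤ c) :
    ‖a * star b‖ ≤ c ^ 2 :=
  (norm_mul_le _ _).trans <| by
    rw [norm_star, sq]; exact mul_le_mul ha hb (norm_nonneg _) ((norm_nonneg _).trans ha)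

theorem norm_sum_mul_star_le [Fintype ξ] {R : Type*} [NonUnitalSeminormedRing R] [StarRing R]
    [NormedStarGroup R] {A : ξ → ι → R} {c : ℝ} (hA : ∀ x y, ‖A x y‖ ≤ c) (y y' : ι) :
    ‖∑ x, A x y * star (A x y')‖ ≤ Fintype.card ξ * c ^ 2 :=
  (norm_sum_le _ _).trans <| (sum_le_card_nsmul _ _ (c ^ 2) fun x _ =>
    norm_mul_star_le_sq (hA x y) (hA x y')).trans_eq (by simp)

variable {𝕜 : Type*} [RCLike 𝕜]

theorem sum_norm_sum_mul_sq_eq [Fintype ι] [Fintype ξ] (A : ξ → ι → 𝕜) (g : ι → 𝕜) :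
    ((∑ x, ‖∑ y, g y * A x y‖ ^ 2 : ℝ) : 𝕜)
      = ∑ y, ∑ y', g y * star (g y') * ∑ x, A x y * star (A x y') := by
  have hx : ∀ x, ((‖∑ y, g y * A x y‖ ^ 2 : ℝ) : 𝕜)
      = ∑ y, ∑ y', g y * star (g y') * (A x y * star (A x y')) := fun x => by
    rw [RCLike.ofReal_pow, ← RCLike.mul_conj, map_sum, sum_mul_sum]
    exact sum_congr rfl fun y _ => sum_congr rfl fun y' _ => by
      simp only [map_mul, starRingEnd_apply]; ring
  rw [RCLike.ofReal_sum]
  simp only [hx, mul_sum]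
  rw [sum_comm]
  exact sum_congr rfl fun y _ => sum_comm

theorem sum_norm_sum_mul_sq_le [Fintype ι] [Fintype ξ] (A : ξ → ι → 𝕜) (g : ι → 𝕜) :
    ∑ x, ‖∑ y, g y * A x y‖ ^ 2 ≤ ∑ y, ∑ y', ‖g y‖ * ‖g y'‖ * ‖∑ x, A x y * star (A x y')‖ := by
  calc ∑ x, ‖∑ y, g y * A x y‖ ^ 2 = ‖((∑ x, ‖∑ y, g y * A x y‖ ^ 2 : ℝ) : 𝕜)‖ := by
        rw [RCLike.norm_ofReal, abs_of_nonneg (by positivity)]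
    _ ≤ _ := by
        rw [sum_norm_sum_mul_sq_eq]
        refine (norm_sum_le _ _).trans (sum_le_sum fun y _ => (norm_sum_le _ _).trans_eq ?_)
        simp

end

theorem mul_mul_rpow_neg_pow {x : ℝ} (hx : 0 < x) (c α : ℝ) (n : ℕ) :
    x * (c * x ^ (-α)) ^ n = c ^ n * x ^ (1 - n * α) := by
  rw [mul_pow, ← Real.rpow_mul_natCast hx.le, sub_eq_add_neg, Real.rpow_add hx, Real.rpow_one]
  ring_nf

theorem mul_add_mul_le_add_add_one_mul_max {a b u v : ℝ} (ha : 0 ≤ a) (hb : 0 ≤ b) (hu : 0 ≤ u) :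
    a * u + b * v ≤ (a + b + 1) * max u v := by
  have h₁ := mul_le_mul_of_nonneg_left (le_max_left u v) ha
  have h₂ := mul_le_mul_of_nonneg_left (le_max_right u v) hb
  have h₃ := hu.trans (le_max_left u v)
  linarith

/-- Finite-field Hörmander-type `L²` bound for
`T(g)(x) = ∑_y g(y) K(x,y) conj(K(x−h,y+h))`: under the single-kernel bound
`|K| ≤ C₁ p^{−α}` and the off-(generalized-)diagonal fourth-moment bound `|I| ≤ C₂ p^{−β}`,
one has `∑ₓ |T(g)(x)|² ≤ C max(p^{1−4α}, p^{1−β}) ∑_y |g(y)|²`,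
with `C` depending only on `C₁, C₂, M`. -/
theorem hoermander_L2 (C₁ C₂ : ℝ) (M : ℕ) :
    ∃ C : ℝ, 0 < C ∧
      ∀ (p : ℕ) [Fact p.Prime] (h : ZMod p), h ≠ 0 →
        ∀ (K : ZMod p → ZMod p → ℂ) (α β : ℝ) (D : Finset (ZMod p × ZMod p)),
          (∀ x y : ZMod p, ‖(K x y)‖ ≤ C₁ * (p : ℝ) ^ (-α)) →
          (∀ y : ZMod p, (D.filter fun q => q.1 = y).card ≤ M) →
          (∀ y' : ZMod p, (D.filter fun q => q.2 = y').card ≤ M) →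
          (∀ y y' : ZMod p, (y, y') ∉ D →
            ‖(∑ x : ZMod p,
              K x y * star (K (x - h) (y + h)) * star (K x y') * K (x - h) (y' + h))‖
              ≤ C₂ * (p : ℝ) ^ (-β)) →
          ∀ g : ZMod p → ℂ,
            ∑ x : ZMod p,
              ‖(∑ y : ZMod p, g y * K x y * star (K (x - h) (y + h)))‖ ^ 2
              ≤ C * max ((p : ℝ) ^ (1 - 4 * α)) ((p : ℝ) ^ (1 - β)) *
                ∑ y : ZMod p, ‖(g y)‖ ^ 2 := by
  refine ⟨M * C₁ ^ 4 + |C₂| + 1, by positivity, ?_⟩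
  intro p _ h _ K α β D hK hrow hcol hI g
  have hp : (0 : ℝ) < p := Nat.cast_pos.mpr (Fact.out : p.Prime).pos
  set A : ZMod p → ZMod p → ℂ := fun x y => K x y * star (K (x - h) (y + h))
  have hdiag : ∀ y y', ‖∑ x, A x y * star (A x y')‖ ≤ C₁ ^ 4 * (p : ℝ) ^ (1 - 4 * α) := by
    have hA : ∀ x y, ‖A x y‖ ≤ (C₁ * (p : ℝ) ^ (-α)) ^ 2 := fun x y =>
      norm_mul_star_le_sq (hK _ _) (hK _ _)
    intro y y'
    refine (norm_sum_mul_star_le hA y y').trans_eq ?_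
    rw [ZMod.card, ← pow_mul, mul_mul_rpow_neg_pow hp]
    norm_num
  have hoff : ∀ y y', (y, y') ∉ D → ‖∑ x, A x y * star (A x y')‖ ≤ |C₂| * (p : ℝ) ^ (-β) := by
    intro y y' hy
    have hgram : ∑ x, A x y * star (A x y') =
        ∑ x, K x y * star (K (x - h) (y + h)) * star (K x y') * K (x - h) (y' + h) :=
      sum_congr rfl fun x _ => by simp only [A, star_mul', star_star]; ring
    rw [hgram]
    exact (hI y y' hy).trans (by gcongr; exact le_abs_self C₂)
  calc ∑ x, ‖∑ y, g y * K x y * star (K (x - h) (y + h))‖ ^ 2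
        = ∑ x, ‖∑ y, g y * A x y‖ ^ 2 := by simp only [A, mul_assoc]
    _ ≤ ∑ y, ∑ y', ‖g y‖ * ‖g y'‖ * ‖∑ x, A x y * star (A x y')‖ := sum_norm_sum_mul_sq_le A g
    _ ≤ (C₁ ^ 4 * (p : ℝ) ^ (1 - 4 * α) * M + |C₂| * (p : ℝ) ^ (-β) * Fintype.card (ZMod p)) *
          ∑ y, ‖g y‖ ^ 2 :=
        sum_sum_mul_mul_le_of_card_fiber_le D hrow hcol (fun y => norm_nonneg _) (by positivity)
          (by positivity) hdiag hoff
    _ ≤ _ := by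
        rw [ZMod.card, mul_assoc |C₂|, ← Real.rpow_add_one hp.ne', neg_add_eq_sub,
          mul_comm _ (M : ℝ), ← mul_assoc]
        gcongr
        exact mul_add_mul_le_add_add_one_mul_max (by positivity) (abs_nonneg C₂) (by positivity)
end

section
/- Let p > 2 be prime, h ∈ (ZMod p)*, and let K(x,y) = p⁻¹ ∑_z e_p(xz + yz²) for y ≠ 0, K(x,0) = 0. Then for y, y' with y ≠ y' and y, y', y+h, y'+h all nonzero, the sum I = ∑_x K(x,y)·conj(K(x−h, y+h))·conj(K(x,y'))·K(x−h, y'+h) satisfies |I| ≤ p^{−3/2}. -/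
/-!
For `y ≠ 0`, completing the square gives `K(x, y) = g(y) e_p(-x²/(4y))` with
`|g(y)| = p^{-1/2}`. The four phases in `I` add up to a quadratic polynomial in `x` whose
linear coefficient `2h (1/(4(y'+h)) - 1/(4(y+h)))` is nonzero, so the remaining sum over `x`
is a non-constant quadratic character sum, of modulus at most `√p`; hence
`|I| ≤ p^{-2} √p`.
-/

open Finset

/-- `e_p(x) = exp(2πi x/p)` for `x ∈ ZMod p`. -/
noncomputable def ep (p : ℕ) (x : ZMod p) : ℂ :=
  Complex.exp (2 * Real.pi * Complex.I * ((x.val : ℂ) / (p : ℂ)))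

/-- The quadratic Gauss sum kernel: `K(x,y) = p⁻¹ ∑_z e_p(xz + yz²)` for `y ≠ 0`, and `0` else. -/
noncomputable def Kquad (p : ℕ) [Fact p.Prime] (x y : ZMod p) : ℂ :=
  if y = 0 then 0 else (p : ℂ)⁻¹ * ∑ z : ZMod p, ep p (x * z + y * z ^ 2)

lemma four_ne_zero_of_two_ne_zero {R : Type*} [Semiring R] [NoZeroDivisors R]
    (h2 : (2 : R) ≠ 0) : (4 : R) ≠ 0 := by
  rw [show (4 : R) = 2 * 2 by norm_num]
  exact mul_ne_zero h2 h2

namespace AddChar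

variable {F : Type*} [Field F] [Fintype F] {ψ : AddChar F ℂ}

lemma sum_apply_add_const (f : F → F) (c : F) :
    ∑ x, ψ (f x + c) = ψ c * ∑ x, ψ (f x) := by
  simp only [map_add_eq_mul, mul_sum, mul_comm]

-- Weyl differencing: `|S|² = ∑ᵤ ψ(Au² + Bu) ∑_w ψ(2Auw)`, and only `u = 0` survives.
lemma norm_sum_quadratic_eq (hψ : ψ.IsPrimitive) (h2 : (2 : F) ≠ 0) {A : F} (hA : A ≠ 0)
    (B : F) : ‖∑ x, ψ (A * x ^ 2 + B * x)‖ = √(Fintype.card F) := by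
  classical
  set S := ∑ x, ψ (A * x ^ 2 + B * x)
  have hdiff : ∀ w u : F, A * (w + u) ^ 2 + B * (w + u) - (A * w ^ 2 + B * w)
      = (A * u ^ 2 + B * u) + w * (2 * A * u) := fun w u => by ring
  have hsq : S * (starRingEnd ℂ) S = Fintype.card F := by
    calc S * (starRingEnd ℂ) S
        = ∑ w, ∑ u, ψ (A * (w + u) ^ 2 + B * (w + u) - (A * w ^ 2 + B * w)) := by
          simp only [S, map_sum, sum_mul_sum, ← map_neg_eq_conj, ← map_add_eq_mul]
          rw [sum_comm]
          refine sum_congr rfl fun w _ => ?_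
          exact (Fintype.sum_equiv (Equiv.addLeft w) _ _ fun u => by simp [sub_eq_add_neg]).symm
      _ = ∑ u, ψ (A * u ^ 2 + B * u) * ∑ w, ψ (w * (2 * A * u)) := by
          simp only [hdiff, map_add_eq_mul, mul_sum]
          exact sum_comm
      _ = Fintype.card F := by
          simp only [sum_mulShift _ hψ]
          rw [Fintype.sum_eq_single 0 fun u hu => by simp [h2, hA, hu]]
          simp
  have hnorm : ‖S‖ ^ 2 = Fintype.card F := by
    exact_mod_cast (Complex.mul_conj' S).symm.trans hsq
  rw [← hnorm, Real.sqrt_sq (norm_nonneg S)]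

lemma norm_sum_quadratic_le (hψ : ψ.IsPrimitive) (h2 : (2 : F) ≠ 0) {A B : F}
    (hAB : A ≠ 0 ∨ B ≠ 0) (C : F) :
    ‖∑ x, ψ (A * x ^ 2 + B * x + C)‖ ≤ √(Fintype.card F) := by
  rw [sum_apply_add_const, norm_mul, norm_apply, one_mul]
  by_cases hA : A = 0
  · have hlin : ∑ x, ψ (B * x) = 0 :=
      sum_eq_zero_of_ne_one (hψ (hAB.resolve_left (not_not.2 hA)))
    simp [hA, hlin]
  · exact (norm_sum_quadratic_eq hψ h2 hA B).le

-- Completing the square.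
lemma sum_linear_add_quadratic (h2 : (2 : F) ≠ 0) (x : F) {y : F} (hy : y ≠ 0) :
    ∑ z, ψ (x * z + y * z ^ 2) = ψ (-x ^ 2 / (4 * y)) * ∑ z, ψ (y * z ^ 2) := by
  rw [← sum_apply_add_const]
  refine Fintype.sum_equiv (Equiv.addRight (x / (2 * y))) _ _ fun z => ?_
  have h4 := four_ne_zero_of_two_ne_zero h2
  congr 1
  simp only [Equiv.coe_addRight]
  field_simp
  ring

end AddChar

lemma exists_quadratic_eq_phase {F : Type*} [Field F] (h2 : (2 : F) ≠ 0) {h y y' : F}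
    (hh : h ≠ 0) (hyy' : y ≠ y') :
    ∃ A B C : F, B ≠ 0 ∧ ∀ x : F,
      -x ^ 2 / (4 * y) - -(x - h) ^ 2 / (4 * (y + h)) - -x ^ 2 / (4 * y')
        + -(x - h) ^ 2 / (4 * (y' + h)) = A * x ^ 2 + B * x + C := by
  refine ⟨(4 * (y + h))⁻¹ + (4 * y')⁻¹ - (4 * y)⁻¹ - (4 * (y' + h))⁻¹,
    2 * h * ((4 * (y' + h))⁻¹ - (4 * (y + h))⁻¹),
    h ^ 2 * ((4 * (y + h))⁻¹ - (4 * (y' + h))⁻¹), ?_, fun x => by ring⟩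
  have hshift : 4 * (y' + h) ≠ 4 * (y + h) :=
    (mul_right_injective₀ (four_ne_zero_of_two_ne_zero h2)).ne
      ((add_left_injective h).ne hyy'.symm)
  exact mul_ne_zero (mul_ne_zero h2 hh) (sub_ne_zero.2 (inv_injective.ne hshift))

lemma ep_eq_stdAddChar {p : ℕ} [NeZero p] (x : ZMod p) : ep p x = ZMod.stdAddChar x := by
  rw [ZMod.stdAddChar_apply, ZMod.toCircle_apply, ep]
  congr 1
  ring

noncomputable def gaussAmplitude (p : ℕ) [NeZero p] (y : ZMod p) : ℂ :=
  (p : ℂ)⁻¹ * ∑ z, ZMod.stdAddChar (y * z ^ 2)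

section ZMod

variable {p : ℕ} [Fact p.Prime]

lemma ZMod.two_ne_zero_of_two_lt (hp : 2 < p) : (2 : ZMod p) ≠ 0 :=
  Ring.two_ne_zero (by rw [ZMod.ringChar_zmod_n]; omega)

lemma Kquad_eq_mul (hp : 2 < p) (x : ZMod p) {y : ZMod p} (hy : y ≠ 0) :
    Kquad p x y = gaussAmplitude p y * ZMod.stdAddChar (-x ^ 2 / (4 * y)) := by
  simp only [Kquad, if_neg hy, ep_eq_stdAddChar, gaussAmplitude,
    AddChar.sum_linear_add_quadratic (ZMod.two_ne_zero_of_two_lt hp) x hy]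
  ring

lemma norm_gaussAmplitude (hp : 2 < p) {y : ZMod p} (hy : y ≠ 0) :
    ‖gaussAmplitude p y‖ = (√p)⁻¹ := by
  have hG := AddChar.norm_sum_quadratic_eq (ZMod.isPrimitive_stdAddChar p)
    (ZMod.two_ne_zero_of_two_lt hp) hy 0
  simp only [zero_mul, add_zero, ZMod.card] at hG
  rw [gaussAmplitude, norm_mul, hG, norm_inv, Complex.norm_natCast, inv_mul_eq_div,
    Real.sqrt_div_self]

end ZMod

/-- Fourth-moment bound for the quadratic Gauss sum kernel: for `h ≠ 0`, `y ≠ y'` with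
`y, y', y+h, y'+h` all nonzero,
`|∑ₓ K(x,y) conj(K(x−h,y+h)) conj(K(x,y')) K(x−h,y'+h)| ≤ p^{−3/2}`. -/
theorem quad_fourth_moment (p : ℕ) [Fact p.Prime] (hp : 2 < p) (h : ZMod p) (hh : h ≠ 0)
    (y y' : ZMod p) (hyy' : y ≠ y') (hy : y ≠ 0) (hy' : y' ≠ 0)
    (hyh : y + h ≠ 0) (hy'h : y' + h ≠ 0) :
    ‖∑ x : ZMod p,
        Kquad p x y * star (Kquad p (x - h) (y + h)) * star (Kquad p x y') *
          Kquad p (x - h) (y' + h)‖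
      ≤ (p : ℝ) ^ (-(3/2 : ℝ)) := by
  have h2 := ZMod.two_ne_zero_of_two_lt hp
  obtain ⟨A, B, C, hB, hphase⟩ := exists_quadratic_eq_phase h2 hh hyy'
  have hstar (t : ZMod p) : star (ZMod.stdAddChar t : ℂ) = (ZMod.stdAddChar t)⁻¹ :=
    (AddChar.inv_apply_eq_conj _ t).symm
  have hterm (x : ZMod p) : Kquad p x y * star (Kquad p (x - h) (y + h)) *
      star (Kquad p x y') * Kquad p (x - h) (y' + h) =
        gaussAmplitude p y * star (gaussAmplitude p (y + h)) * star (gaussAmplitude p y') *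
          gaussAmplitude p (y' + h) * ZMod.stdAddChar (A * x ^ 2 + B * x + C) := by
    rw [Kquad_eq_mul hp x hy, Kquad_eq_mul hp _ hyh, Kquad_eq_mul hp x hy',
      Kquad_eq_mul hp _ hy'h, ← hphase, AddChar.map_add_eq_mul, AddChar.map_sub_eq_div,
      AddChar.map_sub_eq_div, star_mul', star_mul', hstar, hstar]
    ring
  have hsum : ‖∑ x, ZMod.stdAddChar (A * x ^ 2 + B * x + C)‖ ≤ √p := by
    simpa only [ZMod.card] using
      AddChar.norm_sum_quadratic_le (ZMod.isPrimitive_stdAddChar p) h2 (Or.inr hB) C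
  have hp0 : (0 : ℝ) < p := by exact_mod_cast (Fact.out : p.Prime).pos
  rw [sum_congr rfl fun x _ => hterm x, ← mul_sum]
  calc _ = (√p)⁻¹ ^ 4 * ‖∑ x, ZMod.stdAddChar (A * x ^ 2 + B * x + C)‖ := by
        rw [norm_mul, norm_mul, norm_mul, norm_mul, norm_star, norm_star,
          norm_gaussAmplitude hp hy, norm_gaussAmplitude hp hyh, norm_gaussAmplitude hp hy',
          norm_gaussAmplitude hp hy'h]
        ring
    _ ≤ (√p)⁻¹ ^ 4 * √p := by gcongr
    _ = (p : ℝ) ^ (-(3/2 : ℝ)) := by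
        rw [Real.sqrt_eq_rpow, ← Real.rpow_neg hp0.le, ← Real.rpow_natCast,
          ← Real.rpow_mul hp0.le, ← Real.rpow_add hp0]
        norm_num
end

section
/- Let p be a prime, d ≥ 2 with p ∤ d, and c₁, c₂, c₃, c₄ ∈ ZMod p coefficients. The homogeneous polynomial F_d(z₁,z₂,z₃) = c₁ z₁^d + c₂ z₂^d + c₃ z₃^d + c₄ (z₂+z₃−z₁)^d over ZMod p has the property: if all cᵢ ≠ 0 and there is no solution in ZMod p to the compatibility equation (arising from setting ∇F_d = 0), then every nonzero point of the affine cone {F_d = 0} has nonvanishing gradient; i.e., the projective hypersurface {F_d = 0} in P² is smooth. -/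
/-!
Since `p ∤ d`, a critical point of `F_d` satisfies `c₁ z₁^(d-1) = c₄ w^(d-1)` and
`c₂ z₂^(d-1) = c₃ z₃^(d-1) = -c₄ w^(d-1)` with `w = z₂ + z₃ - z₁`. If `w = 0` these force
`z₁ = z₂ = z₃ = 0`; otherwise the ratios `zᵢ / w` solve the compatibility equation, whose
last condition `r₂ + r₃ - r₁ = 1` is the definition of `w` divided by `w`.
-/

section RootRatios

variable {K : Type*} [Field K] {n : ℕ}

lemma div_pow_eq_div_of_mul_pow_eq {a c w z : K} (hw : w ≠ 0) (hc : c ≠ 0)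
    (h : c * z ^ n = a * w ^ n) : (z / w) ^ n = a / c := by
  rw [div_pow, div_eq_div_iff (pow_ne_zero _ hw) hc]
  linear_combination h

lemma exists_root_ratios_of_mul_pow_eq {c₁ c₂ c₃ c₄ z₁ z₂ z₃ : K}
    (hw : z₂ + z₃ - z₁ ≠ 0) (h₁ : c₁ ≠ 0) (h₂ : c₂ ≠ 0) (h₃ : c₃ ≠ 0)
    (e₁ : c₁ * z₁ ^ n = c₄ * (z₂ + z₃ - z₁) ^ n)
    (e₂ : c₂ * z₂ ^ n = -c₄ * (z₂ + z₃ - z₁) ^ n)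
    (e₃ : c₃ * z₃ ^ n = -c₄ * (z₂ + z₃ - z₁) ^ n) :
    ∃ r₁ r₂ r₃ : K, r₁ ^ n = c₄ / c₁ ∧ r₂ ^ n = -c₄ / c₂ ∧ r₃ ^ n = -c₄ / c₃ ∧
      r₂ + r₃ - r₁ = 1 := by
  refine ⟨z₁ / (z₂ + z₃ - z₁), z₂ / (z₂ + z₃ - z₁), z₃ / (z₂ + z₃ - z₁),
    div_pow_eq_div_of_mul_pow_eq hw h₁ e₁, div_pow_eq_div_of_mul_pow_eq hw h₂ e₂,
    div_pow_eq_div_of_mul_pow_eq hw h₃ e₃, ?_⟩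
  rw [← add_div, ← sub_div, div_self hw]

lemma eq_zero_of_mul_pow_eq_mul_zero_pow (hn : n ≠ 0) {a c z : K} (hc : c ≠ 0)
    (h : c * z ^ n = a * 0 ^ n) : z = 0 := by
  rw [zero_pow hn, mul_zero, mul_eq_zero, pow_eq_zero_iff hn] at h
  exact h.resolve_left hc

end RootRatios

theorem Fd_hypersurface_smooth_general (p : ℕ) [Fact p.Prime] (d : ℕ) (hd : 2 ≤ d) (hpd : ¬ (p ∣ d))
    (c₁ c₂ c₃ c₄ : ZMod p) (h₁ : c₁ ≠ 0) (h₂ : c₂ ≠ 0) (h₃ : c₃ ≠ 0)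
    (hns : ¬ ∃ r₁ r₂ r₃ : ZMod p,
      r₁ ^ (d - 1) = c₄ / c₁ ∧ r₂ ^ (d - 1) = -c₄ / c₂ ∧ r₃ ^ (d - 1) = -c₄ / c₃ ∧
      r₂ + r₃ - r₁ = 1) :
    ∀ z₁ z₂ z₃ : ZMod p, ¬ (z₁ = 0 ∧ z₂ = 0 ∧ z₃ = 0) →
      c₁ * z₁ ^ d + c₂ * z₂ ^ d + c₃ * z₃ ^ d + c₄ * (z₂ + z₃ - z₁) ^ d = 0 →
      ¬ ((d : ZMod p) * c₁ * z₁ ^ (d - 1)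
            - (d : ZMod p) * c₄ * (z₂ + z₃ - z₁) ^ (d - 1) = 0 ∧
         (d : ZMod p) * c₂ * z₂ ^ (d - 1)
            + (d : ZMod p) * c₄ * (z₂ + z₃ - z₁) ^ (d - 1) = 0 ∧
         (d : ZMod p) * c₃ * z₃ ^ (d - 1)
            + (d : ZMod p) * c₄ * (z₂ + z₃ - z₁) ^ (d - 1) = 0) := by
  rintro z₁ z₂ z₃ hnz - ⟨g₁, g₂, g₃⟩
  have hd₀ : (d : ZMod p) ≠ 0 := by rwa [Ne, ZMod.natCast_eq_zero_iff]
  have e₁ := mul_left_cancel₀ hd₀ (by linear_combination g₁ :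
    (d : ZMod p) * (c₁ * z₁ ^ (d - 1)) = d * (c₄ * (z₂ + z₃ - z₁) ^ (d - 1)))
  have e₂ := mul_left_cancel₀ hd₀ (by linear_combination g₂ :
    (d : ZMod p) * (c₂ * z₂ ^ (d - 1)) = d * (-c₄ * (z₂ + z₃ - z₁) ^ (d - 1)))
  have e₃ := mul_left_cancel₀ hd₀ (by linear_combination g₃ :
    (d : ZMod p) * (c₃ * z₃ ^ (d - 1)) = d * (-c₄ * (z₂ + z₃ - z₁) ^ (d - 1)))
  by_cases hw : z₂ + z₃ - z₁ = 0
  · have hd₁ : d - 1 ≠ 0 := by omega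
    rw [hw] at e₁ e₂ e₃
    exact hnz ⟨eq_zero_of_mul_pow_eq_mul_zero_pow hd₁ h₁ e₁,
      eq_zero_of_mul_pow_eq_mul_zero_pow hd₁ h₂ e₂, eq_zero_of_mul_pow_eq_mul_zero_pow hd₁ h₃ e₃⟩
  · exact hns (exists_root_ratios_of_mul_pow_eq hw h₁ h₂ h₃ e₁ e₂ e₃)

/-- Smoothness of the projective hypersurface `{F_d = 0}` where
`F_d(z₁,z₂,z₃) = c₁z₁^d + c₂z₂^d + c₃z₃^d + c₄(z₂+z₃−z₁)^d`: if all `cᵢ ≠ 0` and the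
compatibility equation (from `∇F_d = 0`) has no solution, then every nonzero point of the
affine cone `{F_d = 0}` has nonvanishing gradient. -/
theorem Fd_hypersurface_smooth (p : ℕ) [Fact p.Prime] (d : ℕ) (hd : 2 ≤ d) (hpd : ¬ (p ∣ d))
    (c₁ c₂ c₃ c₄ : ZMod p) (h₁ : c₁ ≠ 0) (h₂ : c₂ ≠ 0) (h₃ : c₃ ≠ 0) (h₄ : c₄ ≠ 0)
    (hns : ¬ ∃ r₁ r₂ r₃ : ZMod p,
      r₁ ^ (d - 1) = c₄ / c₁ ∧ r₂ ^ (d - 1) = -c₄ / c₂ ∧ r₃ ^ (d - 1) = -c₄ / c₃ ∧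
      r₂ + r₃ - r₁ = 1) :
    ∀ z₁ z₂ z₃ : ZMod p, ¬ (z₁ = 0 ∧ z₂ = 0 ∧ z₃ = 0) →
      c₁ * z₁ ^ d + c₂ * z₂ ^ d + c₃ * z₃ ^ d + c₄ * (z₂ + z₃ - z₁) ^ d = 0 →
      ¬ ((d : ZMod p) * c₁ * z₁ ^ (d - 1)
            - (d : ZMod p) * c₄ * (z₂ + z₃ - z₁) ^ (d - 1) = 0 ∧
         (d : ZMod p) * c₂ * z₂ ^ (d - 1)
            + (d : ZMod p) * c₄ * (z₂ + z₃ - z₁) ^ (d - 1) = 0 ∧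
         (d : ZMod p) * c₃ * z₃ ^ (d - 1)
            + (d : ZMod p) * c₄ * (z₂ + z₃ - z₁) ^ (d - 1) = 0) :=
  Fd_hypersurface_smooth_general p d hd hpd c₁ c₂ c₃ c₄ h₁ h₂ h₃ hns
end
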